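/- arXiv:1308.1122 — 2 statements merged into one kernel-verified Lean document; each statement's English description precedes it below -/
import Mathlib

section
/- If x, y ∈ ℝⁿ with x majorized by y and f : ℝ → ℝ is convex, then Σᵢ f(xᵢ) ≤ Σᵢ f(yᵢ) (Karamata's inequality). -/
/-!
Sort both vectors decreasingly, `a₁ ≥ … ≥ aₙ` from `x` and `b` from `y`, so that the
majorization hypothesis says that the partial sums of `b - a` are nonnegative and the total
one vanishes. Let `cᵢ` be the right derivative of `f` at `aᵢ`: it is a subgradient, so
`f bᵢ - f aᵢ ≥ cᵢ (bᵢ - aᵢ)`, and it is decreasing in `i` because `f'₊` is monotone.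
Abel summation then gives `∑ cᵢ (bᵢ - aᵢ) ≥ 0`.
-/

/-- The sum of the `k` largest entries of the vector `v`, i.e. the maximum of
`∑ i ∈ s, v i` over all subsets `s` of cardinality `k`. -/
noncomputable def ksum {n : ℕ} (v : Fin n → ℝ) (k : ℕ) : ℝ :=
  sSup {t : ℝ | ∃ s : Finset (Fin n), s.card = k ∧ t = ∑ i ∈ s, v i}

open Finset

theorem ConvexOn.rightDeriv_mul_sub_le_sub {S : Set ℝ} {f : ℝ → ℝ} (hf : ConvexOn ℝ S f)
    {x y : ℝ} (hx : x ∈ interior S) (hy : y ∈ S) :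
    derivWithin f (Set.Ioi x) x * (y - x) ≤ f y - f x := by
  rcases lt_trichotomy y x with hyx | rfl | hxy
  · have h := (hf.slope_le_leftDeriv_of_mem_interior hy hx hyx).trans
      (hf.leftDeriv_le_rightDeriv_of_mem_interior hx)
    rw [slope_def_field, div_le_iff₀ (sub_pos.2 hyx)] at h
    linarith
  · simp
  · have h := hf.rightDeriv_le_slope_of_mem_interior hx hy hxy
    rwa [slope_def_field, le_div_iff₀ (sub_pos.2 hxy)] at h

theorem Finset.sum_le_sum_of_card_eq_of_forall_sdiff_le {ι M : Type*} [DecidableEq ι]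
    [AddCommMonoid M] [LinearOrder M] [IsOrderedCancelAddMonoid M] {s t : Finset ι} {f : ι → M}
    (hst : #s = #t) (h : ∀ i ∈ s \ t, ∀ j ∈ t \ s, f i ≤ f j) :
    ∑ i ∈ s, f i ≤ ∑ i ∈ t, f i := by
  rw [← sum_sdiff_le_sum_sdiff]
  rcases (s \ t).eq_empty_or_nonempty with hs | hs
  · have ht : t \ s = ∅ := by rw [← card_eq_zero, ← card_sdiff_comm hst, hs, card_empty]
    rw [hs, ht]
  · obtain ⟨i₀, hi₀, hmax⟩ := exists_max_image (s \ t) f hs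
    calc ∑ i ∈ s \ t, f i ≤ #(s \ t) • f i₀ := sum_le_card_nsmul _ _ _ hmax
      _ = #(t \ s) • f i₀ := by rw [card_sdiff_comm hst]
      _ ≤ ∑ j ∈ t \ s, f j := card_nsmul_le_sum _ _ _ fun j hj => h i₀ hi₀ j hj

theorem sum_range_mul_le_sum_range_mul_of_antitoneOn {n : ℕ} {c a b : ℕ → ℝ}
    (hc : AntitoneOn c (Set.Iio n))
    (hpartial : ∀ k ≤ n, ∑ i ∈ range k, a i ≤ ∑ i ∈ range k, b i)
    (htotal : ∑ i ∈ range n, a i = ∑ i ∈ range n, b i) :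
    ∑ i ∈ range n, c i * a i ≤ ∑ i ∈ range n, c i * b i := by
  have habel := sum_range_by_parts c (fun i => b i - a i) n
  simp only [smul_eq_mul, sum_sub_distrib, htotal, sub_self, mul_zero, zero_sub] at habel
  rw [← sub_nonneg, ← sum_sub_distrib]
  simp_rw [← mul_sub]
  rw [habel, neg_nonneg]
  refine sum_nonpos fun i hi => ?_
  have hi : i + 1 < n := by rw [mem_range] at hi; omega
  exact mul_nonpos_of_nonpos_of_nonneg
    (sub_nonpos.2 (hc (Set.mem_Iio.2 (by omega)) (Set.mem_Iio.2 hi) (Nat.le_succ i)))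
    (sub_nonneg.2 (hpartial _ hi.le))

theorem ConvexOn.sum_range_comp_le_sum_range_comp {f : ℝ → ℝ} (hf : ConvexOn ℝ Set.univ f)
    {n : ℕ} {a b : ℕ → ℝ} (ha : AntitoneOn a (Set.Iio n))
    (hpartial : ∀ k ≤ n, ∑ i ∈ range k, a i ≤ ∑ i ∈ range k, b i)
    (htotal : ∑ i ∈ range n, a i = ∑ i ∈ range n, b i) :
    ∑ i ∈ range n, f (a i) ≤ ∑ i ∈ range n, f (b i) := by
  set c : ℕ → ℝ := fun i => derivWithin f (Set.Ioi (a i)) (a i)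
  have hrightDeriv : Monotone fun x => derivWithin f (Set.Ioi x) x := by
    simpa only [interior_univ, monotoneOn_univ] using hf.monotoneOn_rightDeriv
  have hsubgradient (i : ℕ) : c i * (b i - a i) ≤ f (b i) - f (a i) :=
    hf.rightDeriv_mul_sub_le_sub (by simp) (Set.mem_univ _)
  have hweighted : ∑ i ∈ range n, c i * a i ≤ ∑ i ∈ range n, c i * b i :=
    sum_range_mul_le_sum_range_mul_of_antitoneOn (hrightDeriv.comp_antitoneOn ha) hpartial htotal
  calc ∑ i ∈ range n, f (a i)
      ≤ ∑ i ∈ range n, (f (a i) + c i * (b i - a i)) := by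
        simp only [sum_add_distrib, mul_sub, sum_sub_distrib]
        linarith
    _ ≤ ∑ i ∈ range n, f (b i) := sum_le_sum fun i _ => by linarith [hsubgradient i]

theorem ksum_comp_perm {n : ℕ} (v : Fin n → ℝ) (σ : Equiv.Perm (Fin n)) (k : ℕ) :
    ksum (v ∘ σ) k = ksum v k := by
  unfold ksum
  congr 1
  ext t
  constructor
  · rintro ⟨s, hs, rfl⟩
    exact ⟨s.map σ.toEmbedding, by simp [hs], by simp⟩
  · rintro ⟨s, hs, rfl⟩
    exact ⟨s.map σ.symm.toEmbedding, by simp [hs], by simp⟩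

theorem ksum_eq_sum_filter_of_antitone {n : ℕ} {u : Fin n → ℝ} (hu : Antitone u) {k : ℕ}
    (hk : k ≤ n) : ksum u k = ∑ i ∈ {i : Fin n | (i : ℕ) < k}, u i := by
  have hcard : #{i : Fin n | (i : ℕ) < k} = k := by rw [Fin.card_filter_val_lt, min_eq_right hk]
  refine IsGreatest.csSup_eq ⟨⟨_, hcard, rfl⟩, ?_⟩
  rintro _ ⟨s, hs, rfl⟩
  refine sum_le_sum_of_card_eq_of_forall_sdiff_le (hs.trans hcard.symm) fun i hi j hj => hu ?_
  simp only [mem_sdiff, mem_filter, mem_univ, true_and] at hi hj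
  exact Fin.le_def.2 (by omega)

def Tuple.antitoneSort {n : ℕ} {α : Type*} [LinearOrder α] (v : Fin n → α) :
    Equiv.Perm (Fin n) :=
  Fin.revPerm.trans (Tuple.sort v)

theorem Tuple.antitone_antitoneSort {n : ℕ} {α : Type*} [LinearOrder α] (v : Fin n → α) :
    Antitone (v ∘ Tuple.antitoneSort v) :=
  (Tuple.monotone_sort v).comp_antitone Fin.rev_anti

noncomputable def decreasingRearrangement {n : ℕ} (v : Fin n → ℝ) (i : ℕ) : ℝ :=
  if h : i < n then v (Tuple.antitoneSort v ⟨i, h⟩) else 0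

theorem decreasingRearrangement_val {n : ℕ} (v : Fin n → ℝ) (i : Fin n) :
    decreasingRearrangement v i = v (Tuple.antitoneSort v i) := by
  simp [decreasingRearrangement]

theorem antitoneOn_decreasingRearrangement {n : ℕ} (v : Fin n → ℝ) :
    AntitoneOn (decreasingRearrangement v) (Set.Iio n) := by
  intro i hi j hj hij
  lift i to Fin n using hi
  lift j to Fin n using hj
  simp only [decreasingRearrangement_val]
  exact Tuple.antitone_antitoneSort v hij

theorem sum_range_comp_decreasingRearrangement {n : ℕ} (v : Fin n → ℝ) (g : ℝ → ℝ) :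
    ∑ i ∈ range n, g (decreasingRearrangement v i) = ∑ i, g (v i) := by
  rw [← Fin.sum_univ_eq_sum_range]
  simp only [decreasingRearrangement_val]
  exact Equiv.sum_comp (Tuple.antitoneSort v) (fun i => g (v i))

theorem sum_range_decreasingRearrangement {n : ℕ} (v : Fin n → ℝ) {k : ℕ} (hk : k ≤ n) :
    ∑ i ∈ range k, decreasingRearrangement v i = ksum v k := by
  rw [← ksum_comp_perm v (Tuple.antitoneSort v),
    ksum_eq_sum_filter_of_antitone (Tuple.antitone_antitoneSort v) hk]
  have hprefix : ({i : Fin n | (i : ℕ) < k} : Finset (Fin n)).map Fin.valEmbedding = range k := by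
    ext j
    simp only [mem_map, mem_filter, mem_univ, true_and, Fin.valEmbedding_apply, mem_range]
    exact ⟨fun ⟨i, hi, hij⟩ => hij ▸ hi, fun hj => ⟨⟨j, by omega⟩, hj, rfl⟩⟩
  rw [← hprefix, sum_map]
  exact sum_congr rfl fun i _ => decreasingRearrangement_val v i

/-- Karamata's inequality: if `x ≺ y` and `f` is convex then `∑ f(xᵢ) ≤ ∑ f(yᵢ)`. -/
theorem karamata (n : ℕ) (x y : Fin n → ℝ) (f : ℝ → ℝ)
    (hmaj : ∀ k : ℕ, ksum x k ≤ ksum y k)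
    (hsum : ∑ i, x i = ∑ i, y i)
    (hf : ConvexOn ℝ Set.univ f) :
    ∑ i, f (x i) ≤ ∑ i, f (y i) := by
  rw [← sum_range_comp_decreasingRearrangement x f, ← sum_range_comp_decreasingRearrangement y f]
  refine hf.sum_range_comp_le_sum_range_comp (antitoneOn_decreasingRearrangement x)
    (fun k hk => ?_) ?_
  · rw [sum_range_decreasingRearrangement x hk, sum_range_decreasingRearrangement y hk]
    exact hmaj k
  · exact (sum_range_comp_decreasingRearrangement x id).trans
      (hsum.trans (sum_range_comp_decreasingRearrangement y id).symm)
end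

section
/- Let x₁ ≥ ... ≥ xₙ > 0 and d₁ ≥ ... ≥ dₙ > 0 satisfy the log-majorization conditions (x₁···x_k ≥ d₁···d_k for k < n, x₁···xₙ = d₁···dₙ). If additionally for every k the sum of the k largest of |log xᵢ| equals the sum of the k largest of |log dᵢ|, then xᵢ = dᵢ for all i. -/
open Finset

lemma Fin.eq_filter_val_lt_card_of_isLowerSet {n : ℕ} {s : Finset (Fin n)}
    (hs : IsLowerSet (s : Set (Fin n))) : s = univ.filter (fun i : Fin n => (i : ℕ) < #s) := by
  ext j
  have := Fin.lt_card_filter_univ_iff_apply_of_imp (j := j) (· ∈ s) fun _ _ hji hi => hs hji hi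
  simpa using this.symm

section ksum

variable {n : ℕ}

lemma sum_le_ksum (v : Fin n → ℝ) (s : Finset (Fin n)) : ∑ i ∈ s, v i ≤ ksum v #s := by
  refine le_csSup ?_ ⟨s, rfl, rfl⟩
  refine ((Set.finite_range fun s : Finset (Fin n) => ∑ i ∈ s, v i).subset ?_).bddAbove
  rintro _ ⟨s, -, rfl⟩
  exact ⟨s, rfl⟩

lemma ksum_card_eq_sum_of_threshold (v : Fin n → ℝ) {s : Finset (Fin n)} {c : ℝ}
    (hs : ∀ i ∈ s, c ≤ v i) (hsc : ∀ i ∉ s, v i ≤ c) :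
    ksum v #s = ∑ i ∈ s, v i := by
  refine le_antisymm (csSup_le ⟨_, s, rfl, rfl⟩ ?_) (sum_le_ksum v s)
  rintro _ ⟨u, hu, rfl⟩
  calc ∑ i ∈ u, v i = ∑ i ∈ u ∩ s, v i + ∑ i ∈ u \ s, v i :=
        (sum_inter_add_sum_sdiff ..).symm
    _ ≤ ∑ i ∈ s ∩ u, v i + #(s \ u) • c := by
        rw [inter_comm, ← card_sdiff_comm hu]
        gcongr
        exact sum_le_card_nsmul _ _ _ fun i hi => hsc i (mem_sdiff.1 hi).2
    _ ≤ ∑ i ∈ s ∩ u, v i + ∑ i ∈ s \ u, v i := by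
        gcongr
        exact card_nsmul_le_sum _ _ _ fun i hi => hs i (mem_sdiff.1 hi).1
    _ = ∑ i ∈ s, v i := sum_inter_add_sum_sdiff ..

lemma sum_sub_sum_le_ksum_abs (v : Fin n → ℝ) {P Q : Finset (Fin n)} (hPQ : Disjoint P Q) :
    ∑ i ∈ P, v i - ∑ i ∈ Q, v i ≤ ksum (fun i => |v i|) (#P + #Q) := by
  rw [← card_union_of_disjoint hPQ]
  refine le_trans ?_ (sum_le_ksum _ _)
  rw [sum_union hPQ, sub_eq_add_neg, ← sum_neg_distrib]
  gcongr with i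
  exacts [le_abs_self _, neg_le_abs _]

end ksum

/-- `P ∪ Q` is a set of largest entries of `|v|`, separated from the rest by `c` and split by
the sign of `v`. -/
structure IsSignedTopSplit {ι : Type*} (v : ι → ℝ) (c : ℝ) (P Q : Finset ι) : Prop where
  disjoint : Disjoint P Q
  nonneg : 0 ≤ c
  le_of_mem_left : ∀ i ∈ P, c ≤ v i
  le_neg_of_mem_right : ∀ i ∈ Q, c ≤ -v i
  abs_le_of_notMem : ∀ i ∉ P, i ∉ Q → |v i| ≤ c

namespace IsSignedTopSplit

variable {n : ℕ} {c : ℝ} {P Q : Finset (Fin n)}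

lemma ksum_abs_eq {v : Fin n → ℝ} (h : IsSignedTopSplit v c P Q) :
    ksum (fun i => |v i|) (#P + #Q) = ∑ i ∈ P, v i - ∑ i ∈ Q, v i := by
  have hP i (hi : i ∈ P) : c ≤ v i := h.le_of_mem_left i hi
  have hQ i (hi : i ∈ Q) : c ≤ -v i := h.le_neg_of_mem_right i hi
  have hPabs : ∑ i ∈ P, |v i| = ∑ i ∈ P, v i :=
    sum_congr rfl fun i hi => abs_of_nonneg (h.nonneg.trans (hP i hi))
  have hQabs : ∑ i ∈ Q, |v i| = -∑ i ∈ Q, v i := by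
    rw [← sum_neg_distrib]
    exact sum_congr rfl fun i hi => abs_of_nonpos (by linarith [h.nonneg, hQ i hi])
  have hmem i (hi : i ∈ P ∪ Q) : c ≤ |v i| := by
    rcases mem_union.1 hi with hi | hi
    exacts [(hP i hi).trans (le_abs_self _), (hQ i hi).trans (neg_le_abs _)]
  have hnotMem i (hi : i ∉ P ∪ Q) : |v i| ≤ c := by
    rw [mem_union, not_or] at hi
    exact h.abs_le_of_notMem i hi.1 hi.2
  rw [← card_union_of_disjoint h.disjoint, ksum_card_eq_sum_of_threshold _ hmem hnotMem,
    sum_union h.disjoint, hPabs, hQabs, sub_eq_add_neg]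

lemma sum_eq_of_ksum_abs_eq {a b : Fin n → ℝ}
    (hle : ∀ L : Finset (Fin n), IsLowerSet (L : Set (Fin n)) →
      ∑ i ∈ L, b i ≤ ∑ i ∈ L, a i)
    (htot : ∑ i, a i = ∑ i, b i)
    (hk : ∀ k, ksum (fun i => |a i|) k = ksum (fun i => |b i|) k)
    (h : IsSignedTopSplit b c P Q) (hP : IsLowerSet (P : Set (Fin n)))
    (hQ : IsUpperSet (Q : Set (Fin n))) :
    ∑ i ∈ P, a i = ∑ i ∈ P, b i ∧ ∑ i ∈ Qᶜ, a i = ∑ i ∈ Qᶜ, b i := by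
  have key := (sum_sub_sum_le_ksum_abs a h.disjoint).trans_eq ((hk _).trans h.ksum_abs_eq)
  have hPle := hle P hP
  have hQcle := hle Qᶜ (by rw [coe_compl]; exact hQ.compl)
  rw [← sum_add_sum_compl Q a, ← sum_add_sum_compl Q b] at htot
  constructor <;> linarith

end IsSignedTopSplit

section LinearOrder

variable {ι : Type*} [LinearOrder ι] [Fintype ι]

lemma isSignedTopSplit_filter (b : ι → ℝ) (L : Finset ι) {c : ℝ} (hc : 0 ≤ c)
    (hin : ∀ i ∈ L, -b i ≤ c) (hout : ∀ i ∉ L, b i ≤ c) :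
    IsSignedTopSplit b c (L.filter (c ≤ b ·)) (Lᶜ.filter (c ≤ -b ·)) := by
  refine ⟨disjoint_filter_filter disjoint_compl_right, hc, by simp, by simp,
    fun i hiP hiQ => ?_⟩
  rw [abs_le]
  by_cases hiL : i ∈ L
  · have h : b i < c := by simpa [hiL] using hiP
    constructor <;> linarith [hin i hiL]
  · have h : -b i < c := by simpa [hiL] using hiQ
    constructor <;> linarith [hout i hiL]

lemma Antitone.forall_nonneg_or_forall_nonpos_compl {b : ι → ℝ} (hb : Antitone b)
    {L : Finset ι} (hL : IsLowerSet (L : Set ι)) :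
    (∀ i ∈ L, 0 ≤ b i) ∨ ∀ j ∉ L, b j ≤ 0 := by
  by_contra! ⟨⟨i, hi, hbi⟩, ⟨j, hj, hbj⟩⟩
  have hij : i ≤ j := le_of_not_ge fun hji => hj (hL hji hi)
  linarith [hb hij]

lemma Antitone.exists_isSignedTopSplit {b : ι → ℝ} (hb : Antitone b) {L : Finset ι}
    (hL : IsLowerSet (L : Set ι)) :
    ∃ c P Q, IsSignedTopSplit b c P Q ∧ IsLowerSet (P : Set ι) ∧ IsUpperSet (Q : Set ι) ∧
      (P = L ∨ Qᶜ = L) := by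
  classical
  -- the least `c ≥ 0` bounding `-b` on `L` and `b` off `L`
  set g : ι → ℝ := fun i => if i ∈ L then -b i else b i
  set c := (insert 0 (univ.image g)).max' (insert_nonempty _ _)
  have hgc i : g i ≤ c := le_max' _ _ (mem_insert_of_mem (mem_image_of_mem _ (mem_univ _)))
  have hc_le {y : ℝ} (h0 : 0 ≤ y) (hin : ∀ i ∈ L, -b i ≤ y)
      (hout : ∀ i ∉ L, b i ≤ y) : c ≤ y := by
    refine max'_le _ _ _ ?_
    simp only [mem_insert, mem_image, mem_univ, true_and]
    rintro _ (rfl | ⟨i, rfl⟩)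
    · exact h0
    · by_cases hi : i ∈ L <;> simp [g, hi, hin, hout]
  have hbefore : ∀ i ∈ L, ∀ j ∉ L, i ≤ j := fun i hi j hj =>
    le_of_not_ge fun hji => hj (hL hji hi)
  refine ⟨c, L.filter (c ≤ b ·), Lᶜ.filter (c ≤ -b ·),
    isSignedTopSplit_filter b L (le_max' _ _ (mem_insert_self _ _))
      (fun i hi => by simpa [g, hi] using hgc i) (fun i hi => by simpa [g, hi] using hgc i),
    ?_, ?_, ?_⟩
  · intro i j hji hi
    simp only [coe_filter, Set.mem_ofPred_eq] at hi ⊢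
    exact ⟨hL hji hi.1, hi.2.trans (hb hji)⟩
  · intro i j hij hi
    simp only [coe_filter, mem_compl, Set.mem_ofPred_eq] at hi ⊢
    exact ⟨fun hj => hi.1 (hL hij hj), hi.2.trans (neg_le_neg (hb hij))⟩
  rcases hb.forall_nonneg_or_forall_nonpos_compl hL with hpos | hneg
  · refine .inl (filter_true_of_mem fun i hi => hc_le (hpos i hi) (fun k hk => ?_) fun j hj => ?_)
    · linarith [hpos k hk, hpos i hi]
    · exact hb (hbefore i hi j hj)
  · have hQ : Lᶜ.filter (c ≤ -b ·) = Lᶜ := filter_true_of_mem fun j hj => by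
      rw [mem_compl] at hj
      refine hc_le (neg_nonneg.2 (hneg j hj)) (fun k hk => neg_le_neg (hb (hbefore k hk j hj)))
        fun k hk => ?_
      linarith [hneg k hk, hneg j hj]
    exact .inr (by rw [hQ, compl_compl])

end LinearOrder

lemma Antitone.sum_eq_of_ksum_abs_eq {n : ℕ} {a b : Fin n → ℝ} (hb : Antitone b)
    (hle : ∀ L : Finset (Fin n), IsLowerSet (L : Set (Fin n)) →
      ∑ i ∈ L, b i ≤ ∑ i ∈ L, a i)
    (htot : ∑ i, a i = ∑ i, b i)
    (hk : ∀ k, ksum (fun i => |a i|) k = ksum (fun i => |b i|) k)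
    {L : Finset (Fin n)} (hL : IsLowerSet (L : Set (Fin n))) :
    ∑ i ∈ L, a i = ∑ i ∈ L, b i := by
  obtain ⟨c, P, Q, h, hP, hQ, rfl | rfl⟩ := hb.exists_isSignedTopSplit hL
  exacts [(h.sum_eq_of_ksum_abs_eq hle htot hk hP hQ).1,
    (h.sum_eq_of_ksum_abs_eq hle htot hk hP hQ).2]

lemma Antitone.eq_of_ksum_abs_eq {n : ℕ} {a b : Fin n → ℝ} (hb : Antitone b)
    (hle : ∀ L : Finset (Fin n), IsLowerSet (L : Set (Fin n)) →
      ∑ i ∈ L, b i ≤ ∑ i ∈ L, a i)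
    (htot : ∑ i, a i = ∑ i, b i)
    (hk : ∀ k, ksum (fun i => |a i|) k = ksum (fun i => |b i|) k) :
    a = b := by
  funext i
  have hIic := hb.sum_eq_of_ksum_abs_eq hle htot hk (L := Iic i) (by simpa using isLowerSet_Iic i)
  have hIio := hb.sum_eq_of_ksum_abs_eq hle htot hk (L := Iio i) (by simpa using isLowerSet_Iio i)
  rw [← Iio_insert, sum_insert notMem_Iio_self, sum_insert notMem_Iio_self] at hIic
  linarith

theorem eq_of_abs_log_equal_ksum_general (n : ℕ) (x d : Fin n → ℝ)
    (hxpos : ∀ i, 0 < x i) (hdpos : ∀ i, 0 < d i)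
    (hddec : ∀ i j : Fin n, i ≤ j → d j ≤ d i)
    (hprod : ∀ k < n, (∏ i ∈ Finset.univ.filter (fun i : Fin n => (i : ℕ) < k), d i) ≤
        ∏ i ∈ Finset.univ.filter (fun i : Fin n => (i : ℕ) < k), x i)
    (hprodeq : ∏ i, x i = ∏ i, d i)
    (heq : ∀ k : ℕ, ksum (fun i => |Real.log (x i)|) k = ksum (fun i => |Real.log (d i)|) k) :
    ∀ i, x i = d i := by
  have hlog {y : Fin n → ℝ} (hy : ∀ i, 0 < y i) (s : Finset (Fin n)) :
      Real.log (∏ i ∈ s, y i) = ∑ i ∈ s, Real.log (y i) :=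
    Real.log_prod fun i _ => (hy i).ne'
  have hb : Antitone fun i => Real.log (d i) :=
    fun i j hij => Real.log_le_log (hdpos j) (hddec i j hij)
  have htot : ∑ i, Real.log (x i) = ∑ i, Real.log (d i) := by
    rw [← hlog hxpos, ← hlog hdpos, hprodeq]
  have hle (L : Finset (Fin n)) (hL : IsLowerSet (L : Set (Fin n))) :
      ∑ i ∈ L, Real.log (d i) ≤ ∑ i ∈ L, Real.log (x i) := by
    rw [Fin.eq_filter_val_lt_card_of_isLowerSet hL, ← hlog hxpos, ← hlog hdpos]
    rcases (card_le_univ L).lt_or_eq with hlt | hcard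
    · exact Real.log_le_log (prod_pos fun i _ => hdpos i) (hprod _ (by simpa using hlt))
    · simp [hcard, hprodeq]
  intro i
  exact Real.log_injOn_pos (hxpos i) (hdpos i) (congrFun (hb.eq_of_ksum_abs_eq hle htot heq) i)

/-- Under the log-majorization hypotheses, if in addition for every `k` the sum of the `k`
largest of `|log xᵢ|` equals the sum of the `k` largest of `|log dᵢ|`, then `xᵢ = dᵢ`. -/
theorem eq_of_abs_log_equal_ksum (n : ℕ) (x d : Fin n → ℝ)
    (hxpos : ∀ i, 0 < x i) (hdpos : ∀ i, 0 < d i)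
    (hxdec : ∀ i j : Fin n, i ≤ j → x j ≤ x i)
    (hddec : ∀ i j : Fin n, i ≤ j → d j ≤ d i)
    (hprod : ∀ k < n, (∏ i ∈ Finset.univ.filter (fun i : Fin n => (i : ℕ) < k), d i) ≤
        ∏ i ∈ Finset.univ.filter (fun i : Fin n => (i : ℕ) < k), x i)
    (hprodeq : ∏ i, x i = ∏ i, d i)
    (heq : ∀ k : ℕ, ksum (fun i => |Real.log (x i)|) k = ksum (fun i => |Real.log (d i)|) k) :
    ∀ i, x i = d i :=
  eq_of_abs_log_equal_ksum_general n x d hxpos hdpos hddec hprod hprodeq heq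
end
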